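/- arXiv:0706.1540 — 3 statements merged into one kernel-verified Lean document; each statement's English description precedes it below -/
import Mathlib

section
/- Let A be a complex n×n matrix and k a positive integer with k < n/3 + 1. For t ∈ ℝ write A(t) = e^{it}A + e^{-it}A*, which is Hermitian, and let λ_k(A(t)) denote its k-th largest eigenvalue. Then for any t₁, t₂, t₃ ∈ [0, 2π) there exists a unit vector v ∈ ℂ^n such that, with μ = v*Av, one has e^{it_j}μ + e^{-it_j}\overline{μ} ≤ λ_k(A(t_j)) for each j = 1, 2, 3. -/
open Matrix
open scoped ComplexOrder

/-- The `k`-th largest value (1-indexed, counted with multiplicity) of a finite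
family `f : Fin n → ℝ`, defined via sorting; junk value `0` if `k` is out of range. -/
noncomputable def kthLargest {n : ℕ} (f : Fin n → ℝ) (k : ℕ) : ℝ :=
  if h : 0 < k ∧ k ≤ n then (f ∘ Tuple.sort f) ⟨n - k, by omega⟩ else 0

/-! For a Hermitian `B` and `c = λ_k(B)`, the vectors orthogonal to every eigenvector of eigenvalue
greater than `c` form a subspace of codimension at most `k - 1` on which `v* B v ≤ c ‖v‖²`.
As `3 (k - 1) < n`, the three such subspaces for `A(t₁), A(t₂), A(t₃)` share a unit vector `v`,
and `v* A(t) v = e^{it} μ + e^{-it} conj μ`. -/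

theorem card_lt_kthLargest_le {n k : ℕ} (f : Fin n → ℝ) (hk : 0 < k) (hkn : k ≤ n) :
    Fintype.card {i // kthLargest f k < f i} ≤ k - 1 := by
  classical
  set σ := Tuple.sort f
  set m : Fin n := ⟨n - k, by omega⟩
  have hkth : kthLargest f k = f (σ m) := dif_pos ⟨hk, hkn⟩
  have hsub : (Finset.univ.filter fun j => kthLargest f k < f (σ j)) ⊆ Finset.Ioi m := by
    intro j hj
    rw [Finset.mem_filter, hkth] at hj
    exact Finset.mem_Ioi.mpr (lt_of_not_ge fun hjm => hj.2.not_ge (Tuple.monotone_sort f hjm))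
  calc Fintype.card {i // kthLargest f k < f i}
      = Fintype.card {j // kthLargest f k < f (σ j)} :=
        (Fintype.card_congr (σ.subtypeEquiv fun _ => Iff.rfl)).symm
    _ ≤ (Finset.Ioi m).card := by
        rw [Fintype.card_subtype]; exact Finset.card_le_card hsub
    _ = k - 1 := by rw [Fin.card_Ioi]; change n - 1 - (n - k) = k - 1; omega

theorem Submodule.finrank_add_finrank_le_finrank_add_finrank_inf {K V : Type*} [DivisionRing K]
    [AddCommGroup V] [Module K V] [FiniteDimensional K V] (p q : Submodule K V) :
    Module.finrank K p + Module.finrank K q ≤ Module.finrank K V + Module.finrank K ↥(p ⊓ q) := by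
  rw [← Submodule.finrank_sup_add_finrank_inf_eq]
  exact Nat.add_le_add_right (p ⊔ q).finrank_le _

theorem Submodule.inf_inf_ne_bot_of_two_mul_finrank_lt {K V : Type*} [DivisionRing K]
    [AddCommGroup V] [Module K V] [FiniteDimensional K V] {p q r : Submodule K V}
    (h : 2 * Module.finrank K V < Module.finrank K p + Module.finrank K q + Module.finrank K r) :
    p ⊓ q ⊓ r ≠ ⊥ := by
  intro hbot
  have hpq := p.finrank_add_finrank_le_finrank_add_finrank_inf q
  have hpqr := (p ⊓ q).finrank_add_finrank_le_finrank_add_finrank_inf r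
  rw [hbot, finrank_bot] at hpqr
  omega

namespace Matrix

variable {𝕜 n : Type*} [RCLike 𝕜] [Fintype n]

theorem star_dotProduct_mul_mul_star_mulVec (U M : Matrix n n 𝕜) (v : n → 𝕜) :
    star v ⬝ᵥ (U * M * star U) *ᵥ v = star (star U *ᵥ v) ⬝ᵥ M *ᵥ (star U *ᵥ v) := by
  rw [← mulVec_mulVec, ← mulVec_mulVec, dotProduct_mulVec, star_mulVec, ← star_eq_conjTranspose,
    star_star]

theorem star_dotProduct_self_star_mulVec_of_mem_unitaryGroup [DecidableEq n]
    {U : Matrix n n 𝕜} (hU : U ∈ unitaryGroup n 𝕜) (v : n → 𝕜) :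
    star (star U *ᵥ v) ⬝ᵥ (star U *ᵥ v) = star v ⬝ᵥ v := by
  simpa [Unitary.mul_star_self_of_mem hU] using (star_dotProduct_mul_mul_star_mulVec U 1 v).symm

theorem star_dotProduct_diagonal_mulVec_le [DecidableEq n] {d : n → ℝ} {c : ℝ} {w : n → 𝕜}
    (hw : ∀ i, c < d i → w i = 0) :
    star w ⬝ᵥ diagonal (RCLike.ofReal ∘ d) *ᵥ w ≤ (c : 𝕜) * (star w ⬝ᵥ w) := by
  simp only [dotProduct, mulVec_diagonal, Finset.mul_sum]
  refine Finset.sum_le_sum fun i _ => ?_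
  rcases le_or_gt (d i) c with hdi | hdi
  · rw [Pi.star_apply, mul_left_comm]
    exact mul_le_mul_of_nonneg_right (RCLike.ofReal_le_ofReal.mpr hdi) (star_mul_self_nonneg (w i))
  · simp [hw i hdi]

theorem star_dotProduct_smul_add_smul_conjTranspose_mulVec (A : Matrix n n 𝕜) (a b : 𝕜)
    (v : n → 𝕜) :
    star v ⬝ᵥ (a • A + b • Aᴴ) *ᵥ v =
      a * (star v ⬝ᵥ A *ᵥ v) + b * starRingEnd 𝕜 (star v ⬝ᵥ A *ᵥ v) := by
  have hconj : starRingEnd 𝕜 (star v ⬝ᵥ A *ᵥ v) = star v ⬝ᵥ Aᴴ *ᵥ v := by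
    rw [starRingEnd_apply, star_dotProduct, star_star, star_mulVec, dotProduct_mulVec]
  rw [hconj, add_mulVec, smul_mulVec, smul_mulVec, dotProduct_add, dotProduct_smul,
    dotProduct_smul, smul_eq_mul, smul_eq_mul]

end Matrix

namespace Matrix.IsHermitian

variable {𝕜 n : Type*} [RCLike 𝕜] [Fintype n] [DecidableEq n] {B : Matrix n n 𝕜}

/-- The span of the eigenvectors of `B` with eigenvalue at most `c`. -/
noncomputable def spectralSubspaceLE (hB : B.IsHermitian) (c : ℝ) : Submodule 𝕜 (n → 𝕜) :=
  LinearMap.ker ((LinearMap.funLeft 𝕜 𝕜 (Subtype.val : {i // c < hB.eigenvalues i} → n)).comp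
    (star (hB.eigenvectorUnitary : Matrix n n 𝕜)).mulVecLin)

theorem mem_spectralSubspaceLE (hB : B.IsHermitian) {c : ℝ} {v : n → 𝕜} :
    v ∈ hB.spectralSubspaceLE c ↔
      ∀ i, c < hB.eigenvalues i → (star (hB.eigenvectorUnitary : Matrix n n 𝕜) *ᵥ v) i = 0 := by
  simp [spectralSubspaceLE, funext_iff, LinearMap.funLeft]

theorem card_sub_card_le_finrank_spectralSubspaceLE (hB : B.IsHermitian) (c : ℝ) :
    Fintype.card n - Fintype.card {i // c < hB.eigenvalues i} ≤
      Module.finrank 𝕜 (hB.spectralSubspaceLE c) := by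
  obtain ⟨f, hf⟩ : ∃ f : (n → 𝕜) →ₗ[𝕜] ({i // c < hB.eigenvalues i} → 𝕜),
      hB.spectralSubspaceLE c = LinearMap.ker f := ⟨_, rfl⟩
  have hrank := f.finrank_range_add_finrank_ker
  have hrange := (LinearMap.range f).finrank_le
  rw [Module.finrank_fintype_fun_eq_card] at hrank hrange
  rw [hf]
  omega

theorem star_dotProduct_mulVec_le_of_mem_spectralSubspaceLE (hB : B.IsHermitian) {c : ℝ}
    {v : n → 𝕜} (hv : v ∈ hB.spectralSubspaceLE c) :
    star v ⬝ᵥ B *ᵥ v ≤ (c : 𝕜) * (star v ⬝ᵥ v) := by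
  set U := (hB.eigenvectorUnitary : Matrix n n 𝕜)
  have hB' : B = U * diagonal (RCLike.ofReal ∘ hB.eigenvalues) * star U := by
    simpa [Unitary.conjStarAlgAut_apply] using hB.spectral_theorem
  rw [hB', star_dotProduct_mul_mul_star_mulVec,
    ← star_dotProduct_self_star_mulVec_of_mem_unitaryGroup hB.eigenvectorUnitary.2 v]
  exact star_dotProduct_diagonal_mulVec_le (hB.mem_spectralSubspaceLE.mp hv)

end Matrix.IsHermitian

theorem Submodule.exists_mem_star_dotProduct_self_eq_one {𝕜 n : Type*} [RCLike 𝕜] [Fintype n]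
    {S : Submodule 𝕜 (n → 𝕜)} (hS : S ≠ ⊥) : ∃ v ∈ S, star v ⬝ᵥ v = 1 := by
  obtain ⟨v, hvS, hv0⟩ := S.exists_mem_ne_zero_of_ne_bot hS
  set x : EuclideanSpace 𝕜 n := WithLp.toLp 2 v
  have hx : x ≠ 0 := by simpa [x] using hv0
  refine ⟨(NormedSpace.normalize x).ofLp, S.smul_of_tower_mem _ hvS, ?_⟩
  rw [dotProduct_comm, ← EuclideanSpace.inner_eq_star_dotProduct, inner_self_eq_norm_sq_to_K,
    NormedSpace.norm_normalize_eq_one_iff.mpr hx]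
  simp

theorem exists_unit_vector_three_halfplanes_general (n k : ℕ) (hk : 0 < k)
    (hk3 : (k : ℝ) < (n : ℝ) / 3 + 1) (A : Matrix (Fin n) (Fin n) ℂ)
    (hHerm : ∀ t : ℝ,
      (Complex.exp (Complex.I * t) • A + Complex.exp (-(Complex.I * t)) • Aᴴ).IsHermitian)
    (t₁ t₂ t₃ : ℝ) :
    ∃ v : Fin n → ℂ, star v ⬝ᵥ v = 1 ∧
      ∀ t ∈ ({t₁, t₂, t₃} : Set ℝ),
        Complex.exp (Complex.I * t) * (star v ⬝ᵥ A.mulVec v) +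
          Complex.exp (-(Complex.I * t)) * (starRingEnd ℂ) (star v ⬝ᵥ A.mulVec v) ≤
        ((kthLargest ((hHerm t).eigenvalues) k : ℝ) : ℂ) := by
  have h3k : 3 * (k - 1) < n := by
    have : (3 * k : ℝ) < n + 3 := by linarith
    have : 3 * k < n + 3 := by exact_mod_cast this
    omega
  let S t := (hHerm t).spectralSubspaceLE (kthLargest (hHerm t).eigenvalues k)
  have hS : ∀ t, n - (k - 1) ≤ Module.finrank ℂ (S t) := fun t => by
    refine le_trans ?_ ((hHerm t).card_sub_card_le_finrank_spectralSubspaceLE _)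
    have hcard := card_lt_kthLargest_le (hHerm t).eigenvalues hk (by omega)
    rw [Fintype.card_fin]
    omega
  obtain ⟨v, hvS, hv⟩ := Submodule.exists_mem_star_dotProduct_self_eq_one
    (Submodule.inf_inf_ne_bot_of_two_mul_finrank_lt (p := S t₁) (q := S t₂) (r := S t₃) (by
      have := hS t₁; have := hS t₂; have := hS t₃
      rw [Module.finrank_fin_fun]
      omega))
  refine ⟨v, hv, fun t ht => ?_⟩
  have hvt : v ∈ S t := by
    obtain ⟨⟨hv₁, hv₂⟩, hv₃⟩ := hvS
    rcases ht with rfl | rfl | rfl <;> assumption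
  have := (hHerm t).star_dotProduct_mulVec_le_of_mem_spectralSubspaceLE hvt
  rwa [hv, mul_one, star_dotProduct_smul_add_smul_conjTranspose_mulVec] at this

/-- Let `A` be an `n × n` complex matrix and `k` a positive integer with
`k < n/3 + 1`.  For `t ∈ ℝ`, `A(t) = e^{it} A + e^{-it} Aᴴ` is Hermitian; write
`λ_k(A(t))` for its `k`-th largest eigenvalue.  Then for any `t₁, t₂, t₃ ∈ [0, 2π)`
there is a unit vector `v ∈ ℂ^n` such that, with `μ = v* A v`, one has
`e^{it_j} μ + e^{-it_j} conj μ ≤ λ_k(A(t_j))` for `j = 1, 2, 3`. -/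
theorem exists_unit_vector_three_halfplanes (n k : ℕ) (hn : 0 < n) (hk : 0 < k)
    (hk3 : (k : ℝ) < (n : ℝ) / 3 + 1) (A : Matrix (Fin n) (Fin n) ℂ)
    (hHerm : ∀ t : ℝ,
      (Complex.exp (Complex.I * t) • A + Complex.exp (-(Complex.I * t)) • Aᴴ).IsHermitian)
    (t₁ t₂ t₃ : ℝ) (ht₁ : t₁ ∈ Set.Ico 0 (2 * Real.pi))
    (ht₂ : t₂ ∈ Set.Ico 0 (2 * Real.pi)) (ht₃ : t₃ ∈ Set.Ico 0 (2 * Real.pi)) :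
    ∃ v : Fin n → ℂ, star v ⬝ᵥ v = 1 ∧
      ∀ t ∈ ({t₁, t₂, t₃} : Set ℝ),
        Complex.exp (Complex.I * t) * (star v ⬝ᵥ A.mulVec v) +
          Complex.exp (-(Complex.I * t)) * (starRingEnd ℂ) (star v ⬝ᵥ A.mulVec v) ≤
        ((kthLargest ((hHerm t).eigenvalues) k : ℝ) : ℂ) :=
  exists_unit_vector_three_halfplanes_general n k hk hk3 A hHerm t₁ t₂ t₃
end

section
/- Let k ≥ 2 be an integer, n = 3k − 3, and w = e^{2πi/3}. Let A be the n×n diagonal matrix A = I_{k−1} ⊕ w I_{k−1} ⊕ w² I_{k−1} (the block-diagonal matrix with diagonal blocks I_{k−1}, w I_{k−1}, and w² I_{k−1}). Then the rank-k numerical range Λ_k(A) is empty. -/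
open Matrix

lemma exists_vec_ne_zero_of_card_lt {m : Type*} [Fintype m] {k : ℕ}
    (h : Fintype.card m < k) (X : Matrix m (Fin k) ℂ) :
    ∃ v : Fin k → ℂ, v ≠ 0 ∧ X *ᵥ v = 0 := by
  have hni : ¬ Function.Injective X.mulVecLin := by
    intro hinj
    have := LinearMap.finrank_le_finrank_of_injective hinj
    simp [Module.finrank_pi] at this
    omega
  rw [Function.not_injective_iff] at hni
  obtain ⟨x, y, hxy, hne⟩ := hni
  refine ⟨x - y, sub_ne_zero.mpr hne, ?_⟩
  have : X.mulVecLin (x - y) = 0 := by rw [map_sub, hxy, sub_self]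
  simpa [Matrix.mulVecLin_apply] using this

lemma card_block_le (k : ℕ) (hk : 2 ≤ k) (j : ℕ) :
    Fintype.card {i : Fin (3 * k - 3) // (i : ℕ) / (k - 1) = j} ≤ k - 1 := by
  have h1 : 0 < k - 1 := by omega
  have : Fintype.card {i : Fin (3 * k - 3) // (i : ℕ) / (k - 1) = j}
      ≤ Fintype.card (Fin (k - 1)) := by
    apply Fintype.card_le_of_injective
      (fun p => ⟨(p.1 : ℕ) % (k - 1), Nat.mod_lt _ h1⟩)
    intro p q hpq
    have hmod : (p.1 : ℕ) % (k - 1) = (q.1 : ℕ) % (k - 1) := by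
      simpa using congrArg Fin.val hpq
    have e1 : (k - 1) * ((p.1:ℕ) / (k-1)) + (p.1 : ℕ) % (k - 1) = (p.1 : ℕ) :=
      Nat.div_add_mod _ _
    have e2 : (k - 1) * ((q.1:ℕ) / (k-1)) + (q.1 : ℕ) % (k - 1) = (q.1 : ℕ) :=
      Nat.div_add_mod _ _
    have hp := p.2; have hq := q.2
    rw [hp] at e1; rw [hq] at e2
    exact Subtype.ext (Fin.ext (by omega))
  simpa using this

/-- Let `k ≥ 2`, `n = 3k − 3`, and `w = e^{2πi/3}`.  For the block-diagonal matrix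
`A = I_{k−1} ⊕ w I_{k−1} ⊕ w² I_{k−1}` (realized as the diagonal matrix whose `i`-th
diagonal entry is `w^(i / (k−1))`), the rank-`k` numerical range of `A` is empty. -/
theorem rankKNumericalRange_empty_example (k : ℕ) (hk : 2 ≤ k)
    (w : ℂ) (hw : w = Complex.exp (2 * Real.pi * Complex.I / 3))
    (A : Matrix (Fin (3 * k - 3)) (Fin (3 * k - 3)) ℂ)
    (hA : A = Matrix.diagonal (fun i : Fin (3 * k - 3) => w ^ ((i : ℕ) / (k - 1)))) :
    ¬ ∃ (lam : ℂ) (X : Matrix (Fin (3 * k - 3)) (Fin k) ℂ),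
        Xᴴ * X = 1 ∧ Xᴴ * A * X = lam • (1 : Matrix (Fin k) (Fin k) ℂ) := by
  rintro ⟨lam, X, hX, hAX⟩
  have hk1 : 0 < k - 1 := by omega
  -- facts about w
  have harg : (2 * (Real.pi : ℂ) * Complex.I / 3) = ((2 * Real.pi / 3 : ℝ) : ℂ) * Complex.I := by
    push_cast; ring
  have hang : (2 * Real.pi / 3 : ℝ) = Real.pi - Real.pi / 3 := by ring
  have hwre : w.re = -(1/2) := by
    rw [hw, harg, Complex.exp_ofReal_mul_I_re, hang, Real.cos_pi_sub, Real.cos_pi_div_three]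
  have hwim : w.im = Real.sqrt 3 / 2 := by
    rw [hw, harg, Complex.exp_ofReal_mul_I_im, hang, Real.sin_pi_sub, Real.sin_pi_div_three]
  have h33 : Real.sqrt 3 * Real.sqrt 3 = 3 := Real.mul_self_sqrt (by norm_num)
  have hw2re : (w ^ 2).re = -(1/2) := by
    rw [pow_two, Complex.mul_re, hwre, hwim]
    linear_combination (-(1/4 : ℝ)) * h33
  have hw2im : (w ^ 2).im = -(Real.sqrt 3 / 2) := by
    rw [pow_two, Complex.mul_im, hwre, hwim]; ring
  have hdivlt : ∀ i : Fin (3 * k - 3), (i : ℕ) / (k - 1) < 3 := by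
    intro i
    have hi := i.2
    exact (Nat.div_lt_iff_lt_mul hk1).mpr (by omega)
  -- the key extraction
  have key : ∀ j : ℕ, j < 3 → ∃ s : ℕ → ℝ, (∀ m, 0 ≤ s m) ∧ s j = 0 ∧
      0 < s 0 + s 1 + s 2 ∧
      lam * ((s 0 + s 1 + s 2 : ℝ) : ℂ) = (s 0 : ℂ) + (s 1 : ℂ) * w + (s 2 : ℂ) * w ^ 2 := by
    intro j hj
    obtain ⟨v, hv, hker⟩ := exists_vec_ne_zero_of_card_lt
      (lt_of_le_of_lt (card_block_le k hk j) (by omega))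
      (fun (p : {i : Fin (3 * k - 3) // (i : ℕ) / (k - 1) = j}) (b : Fin k) => X p.1 b)
    set u : Fin (3 * k - 3) → ℂ := X *ᵥ v with hu
    have hu0 : ∀ i : Fin (3 * k - 3), (i : ℕ) / (k - 1) = j → u i = 0 := by
      intro i hi
      have := congrFun hker ⟨i, hi⟩
      simpa [Matrix.mulVec, dotProduct, hu] using this
    set s : ℕ → ℝ := fun m => ∑ i : Fin (3 * k - 3), if (i : ℕ) / (k - 1) = m then Complex.normSq (u i) else 0
      with hsdef
    have hnn : ∀ m, 0 ≤ s m := by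
      intro m
      apply Finset.sum_nonneg
      intro i _
      split <;> [exact Complex.normSq_nonneg _; exact le_rfl]
    have hsj : s j = 0 := by
      apply Finset.sum_eq_zero
      intro i _
      split
      · next h => rw [hu0 i h]; simp
      · rfl
    -- dot product identities
    have e1 : star u ⬝ᵥ u = star v ⬝ᵥ v := by
      calc star u ⬝ᵥ u = (star v ᵥ* Xᴴ) ⬝ᵥ (X *ᵥ v) := by rw [hu, star_mulVec]
        _ = star v ⬝ᵥ ((Xᴴ * X) *ᵥ v) := by rw [← dotProduct_mulVec, mulVec_mulVec]
        _ = star v ⬝ᵥ v := by rw [hX, one_mulVec]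
    have e2 : star u ⬝ᵥ (A *ᵥ u) = lam * (star v ⬝ᵥ v) := by
      calc star u ⬝ᵥ (A *ᵥ u) = (star v ᵥ* Xᴴ) ⬝ᵥ (A *ᵥ (X *ᵥ v)) := by rw [hu, star_mulVec]
        _ = star v ⬝ᵥ ((Xᴴ * A * X) *ᵥ v) := by
            rw [← dotProduct_mulVec, mulVec_mulVec, mulVec_mulVec]
        _ = star v ⬝ᵥ ((lam • (1 : Matrix (Fin k) (Fin k) ℂ)) *ᵥ v) := by
            rw [hAX]
        _ = lam * (star v ⬝ᵥ v) := by
            rw [smul_mulVec, one_mulVec, dotProduct_smul, smul_eq_mul]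
    -- compute the dot products as sums of normSq
    have hS : star v ⬝ᵥ v = ((∑ b, Complex.normSq (v b) : ℝ) : ℂ) := by
      rw [dotProduct, Complex.ofReal_sum]
      refine Finset.sum_congr rfl fun b _ => ?_
      rw [Complex.normSq_eq_conj_mul_self]; rfl
    have hSpos : 0 < ∑ b, Complex.normSq (v b) := by
      obtain ⟨b, hb⟩ : ∃ b, v b ≠ 0 := by
        by_contra h
        push_neg at h
        exact hv (funext h)
      exact Finset.sum_pos' (fun b _ => Complex.normSq_nonneg _)
        ⟨b, Finset.mem_univ b, Complex.normSq_pos.mpr hb⟩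
    have hsplit : (∑ i, Complex.normSq (u i)) = s 0 + s 1 + s 2 := by
      simp only [hsdef]
      rw [← Finset.sum_add_distrib, ← Finset.sum_add_distrib]
      refine Finset.sum_congr rfl fun i _ => ?_
      have h3 := hdivlt i
      revert h3
      generalize ((i : ℕ) / (k - 1)) = m
      intro h3
      interval_cases m <;> simp
    have hL1 : star u ⬝ᵥ u = ((s 0 + s 1 + s 2 : ℝ) : ℂ) := by
      rw [dotProduct, ← hsplit, Complex.ofReal_sum]
      refine Finset.sum_congr rfl fun i _ => ?_
      rw [Complex.normSq_eq_conj_mul_self]; rfl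
    have hcast : ∀ m, ((s m : ℝ) : ℂ) = ∑ i : Fin (3 * k - 3), if (i : ℕ) / (k - 1) = m
        then (Complex.normSq (u i) : ℂ) else 0 := by
      intro m
      simp only [hsdef]
      push_cast [apply_ite (Complex.ofReal)]
      rfl
    have hL2 : star u ⬝ᵥ (A *ᵥ u) = (s 0 : ℂ) + (s 1 : ℂ) * w + (s 2 : ℂ) * w ^ 2 := by
      rw [hcast, hcast, hcast, Finset.sum_mul, Finset.sum_mul,
        ← Finset.sum_add_distrib, ← Finset.sum_add_distrib]
      rw [dotProduct]
      refine Finset.sum_congr rfl fun i _ => ?_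
      have hterm : star u i * ((A *ᵥ u) i)
          = w ^ ((i : ℕ) / (k - 1)) * (Complex.normSq (u i) : ℂ) := by
        rw [hA, mulVec_diagonal, Complex.normSq_eq_conj_mul_self]
        have hst : star u i = (starRingEnd ℂ) (u i) := rfl
        rw [hst]
        ring
      rw [hterm]
      have h3 := hdivlt i
      revert h3
      generalize ((i : ℕ) / (k - 1)) = m
      intro h3
      interval_cases m <;> simp <;> ring
    -- combine
    have hTS : (s 0 + s 1 + s 2 : ℝ) = ∑ b, Complex.normSq (v b) := by
      have := e1
      rw [hL1, hS] at this
      exact_mod_cast this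
    refine ⟨s, hnn, hsj, by rw [hTS]; exact hSpos, ?_⟩
    rw [← hL2, e2, hS, hTS]
  -- instantiate at the three blocks
  obtain ⟨s, hsnn, hs0, hspos, hseq⟩ := key 0 (by norm_num)
  obtain ⟨t, htnn, ht1, htpos, hteq⟩ := key 1 (by norm_num)
  obtain ⟨r, hrnn, hr2, hrpos, hreq⟩ := key 2 (by norm_num)
  -- take real and imaginary parts
  have hre : ∀ (a : ℕ → ℝ), lam * ((a 0 + a 1 + a 2 : ℝ) : ℂ)
      = (a 0 : ℂ) + (a 1 : ℂ) * w + (a 2 : ℂ) * w ^ 2 →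
      lam.re * (a 0 + a 1 + a 2) = a 0 - a 1 / 2 - a 2 / 2 := by
    intro a h
    have := congrArg Complex.re h
    simp only [Complex.mul_re, Complex.add_re, Complex.ofReal_re, Complex.ofReal_im,
      hwre, hwim, hw2re, hw2im] at this
    linarith [this]
  have him : ∀ (a : ℕ → ℝ), lam * ((a 0 + a 1 + a 2 : ℝ) : ℂ)
      = (a 0 : ℂ) + (a 1 : ℂ) * w + (a 2 : ℂ) * w ^ 2 →
      lam.im * (a 0 + a 1 + a 2) = a 1 * (Real.sqrt 3 / 2) - a 2 * (Real.sqrt 3 / 2) := by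
    intro a h
    have := congrArg Complex.im h
    simp only [Complex.mul_im, Complex.add_im, Complex.ofReal_re, Complex.ofReal_im,
      hwre, hwim, hw2re, hw2im] at this
    linarith [this]
  have hres := hre s hseq
  have hret := hre t hteq
  have hrer := hre r hreq
  have hims := him s hseq
  have himt := him t hteq
  have himr := him r hreq
  -- from block 0 : Re lam = -1/2
  rw [hs0] at hres hspos
  have hlamre : lam.re = -(1/2) := by
    have h : lam.re * (0 + s 1 + s 2) = (-(1/2)) * (0 + s 1 + s 2) := by linarith
    exact mul_right_cancel₀ (ne_of_gt hspos) h
  -- from block 1 : t 0 = 0 and Im lam = -√3/2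
  rw [ht1] at hret htpos himt
  have ht0 : t 0 = 0 := by rw [hlamre] at hret; linarith
  rw [ht0] at hret htpos himt
  have hlamim : lam.im = -(Real.sqrt 3 / 2) := by
    have h : lam.im * (0 + 0 + t 2) = (-(Real.sqrt 3 / 2)) * (0 + 0 + t 2) := by linarith
    exact mul_right_cancel₀ (ne_of_gt htpos) h
  -- from block 2 : r 0 = 0 and Im lam = √3/2
  rw [hr2] at hrer hrpos himr
  have hr0 : r 0 = 0 := by rw [hlamre] at hrer; linarith
  rw [hr0] at hrer hrpos himr
  have hlamim' : lam.im = Real.sqrt 3 / 2 := by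
    have h : lam.im * (0 + r 1 + 0) = (Real.sqrt 3 / 2) * (0 + r 1 + 0) := by linarith
    exact mul_right_cancel₀ (ne_of_gt hrpos) h
  have hs3 : 0 < Real.sqrt 3 := Real.sqrt_pos.mpr (by norm_num)
  rw [hlamim] at hlamim'
  linarith
end

section
/- Let A be a complex n×n matrix and k a positive integer with k ≤ n. For t ∈ ℝ write A(t) = e^{it}A + e^{-it}A*, which is Hermitian, and let λ_k(A(t)) denote its k-th largest eigenvalue. If μ ∈ Λ_k(A), then for every t ∈ [0, 2π), e^{it}μ + e^{-it}\overline{μ} ≤ λ_k(A(t)). -/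
/-!
Diagonalise `A(t)` by a unitary `U`. Then `Y = Uᴴ X` is an isometry compressing the diagonal
matrix of eigenvalues to the real scalar `c = 2 Re (e^{it} μ)`. Fewer than `k` eigenvalues exceed
`λ_k`, so the `k`-dimensional range of `Y` contains a nonzero vector `v` vanishing at all of them,
and `c ‖v‖² = ⟨v, diag(λ) v⟩ ≤ λ_k ‖v‖²`.
-/

open Matrix
open scoped ComplexOrder

open Finset in
theorem card_filter_kthLargest_lt_lt {n : ℕ} (f : Fin n → ℝ) {k : ℕ} (hk : 0 < k) (hkn : k ≤ n) :
    #{i | kthLargest f k < f i} < k := by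
  set m : Fin n := ⟨n - k, by omega⟩
  have hval : kthLargest f k = f (Tuple.sort f m) := dif_pos ⟨hk, hkn⟩
  calc #{i | kthLargest f k < f i} ≤ #(Ioi m) := by
        refine card_le_card_of_injOn (Tuple.sort f).symm (fun i hi => ?_)
          (Tuple.sort f).symm.injective.injOn
        rw [mem_coe, mem_filter_univ, hval] at hi
        rw [mem_coe, mem_Ioi]
        by_contra! hle
        simpa using (Tuple.monotone_sort f hle).trans_lt hi
    _ < k := by rw [Fin.card_Ioi]; change n - 1 - (n - k) < k; omega

theorem exists_ne_zero_mulVec_apply_eq_zero {K ι κ : Type*} [Field K] [Fintype ι] [Fintype κ]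
    (Y : Matrix ι κ K) (S : Finset ι) (hS : S.card < Fintype.card κ) :
    ∃ w ≠ 0, ∀ i ∈ S, (Y *ᵥ w) i = 0 := by
  let restrictY : (κ → K) →ₗ[K] (S → K) := LinearMap.funLeft K K Subtype.val ∘ₗ Y.mulVecLin
  obtain ⟨w, hw, hw0⟩ := Submodule.exists_mem_ne_zero_of_ne_bot
    (LinearMap.ker_ne_bot_of_finrank_lt (f := restrictY) (by simpa using hS))
  exact ⟨w, hw0, fun i hi => congrFun hw ⟨i, hi⟩⟩

section RCLike

variable {𝕜 ι : Type*} [RCLike 𝕜] [Fintype ι] [DecidableEq ι]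

theorem re_dotProduct_diagonal_mulVec_le (f : ι → ℝ) (c : ℝ) (v : ι → 𝕜)
    (hv : ∀ i, c < f i → v i = 0) :
    RCLike.re (star v ⬝ᵥ diagonal (fun i => (f i : 𝕜)) *ᵥ v) ≤ c * RCLike.re (star v ⬝ᵥ v) := by
  simp only [dotProduct, mulVec_diagonal, Pi.star_apply, map_sum, Finset.mul_sum]
  refine Finset.sum_le_sum fun i _ => ?_
  rw [mul_left_comm, RCLike.star_def, RCLike.conj_mul, ← RCLike.ofReal_pow, RCLike.re_ofReal_mul,
    RCLike.ofReal_re]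
  rcases le_or_gt (f i) c with hfi | hfi
  · exact mul_le_mul_of_nonneg_right hfi (sq_nonneg _)
  · simp [hv i hfi]

open Finset in
theorem le_of_conjTranspose_mul_diagonal_mul_eq_smul_one {κ : Type*} [Fintype κ] [DecidableEq κ]
    {f : ι → ℝ} {Y : Matrix ι κ 𝕜} (hY : Yᴴ * Y = 1) {c : ℝ}
    (hc : Yᴴ * diagonal (fun i => (f i : 𝕜)) * Y = (c : 𝕜) • 1) {lam : ℝ}
    (hcard : #{i | lam < f i} < Fintype.card κ) : c ≤ lam := by
  obtain ⟨w, hw0, hw⟩ := exists_ne_zero_mulVec_apply_eq_zero Y _ hcard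
  have hquad (M : Matrix ι ι 𝕜) :
      star (Y *ᵥ w) ⬝ᵥ M *ᵥ (Y *ᵥ w) = star w ⬝ᵥ (Yᴴ * M * Y) *ᵥ w := by
    simp only [star_mulVec, ← dotProduct_mulVec, mulVec_mulVec, Matrix.mul_assoc]
  have hnorm : star (Y *ᵥ w) ⬝ᵥ Y *ᵥ w = star w ⬝ᵥ w := by
    simpa [hY] using hquad 1
  have hbound := re_dotProduct_diagonal_mulVec_le f lam (Y *ᵥ w)
    fun i hi => hw i (by simpa using hi)
  rw [hquad, hc, hnorm, smul_mulVec, one_mulVec, dotProduct_smul, smul_eq_mul,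
    RCLike.re_ofReal_mul] at hbound
  have hpos : 0 < RCLike.re (star w ⬝ᵥ w) :=
    (RCLike.pos_iff.mp (dotProduct_star_self_pos_iff.mpr hw0)).1
  exact le_of_mul_le_mul_right hbound hpos

end RCLike

theorem Matrix.IsHermitian.le_kthLargest_eigenvalues {𝕜 : Type*} [RCLike 𝕜] {n k : ℕ}
    {H : Matrix (Fin n) (Fin n) 𝕜} (hH : H.IsHermitian) (hk : 0 < k) (hkn : k ≤ n)
    {X : Matrix (Fin n) (Fin k) 𝕜} (hX : Xᴴ * X = 1) {c : ℝ} (hc : Xᴴ * H * X = (c : 𝕜) • 1) :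
    c ≤ kthLargest hH.eigenvalues k := by
  set U : Matrix (Fin n) (Fin n) 𝕜 := (hH.eigenvectorUnitary : Matrix (Fin n) (Fin n) 𝕜)
  set D := diagonal (fun i => (hH.eigenvalues i : 𝕜))
  have hspec : H = U * D * Uᴴ := hH.spectral_theorem
  refine le_of_conjTranspose_mul_diagonal_mul_eq_smul_one (Y := Uᴴ * X) ?_ ?_
    (by simpa using card_filter_kthLargest_lt_lt hH.eigenvalues hk hkn)
  · rw [conjTranspose_mul, conjTranspose_conjTranspose, Matrix.mul_assoc, ← Matrix.mul_assoc U,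
      ← star_eq_conjTranspose, Unitary.mul_star_self_of_mem hH.eigenvectorUnitary.2,
      Matrix.one_mul, hX]
  · change (Uᴴ * X)ᴴ * D * (Uᴴ * X) = (c : 𝕜) • 1
    rw [← hc, hspec]
    simp only [conjTranspose_mul, conjTranspose_conjTranspose, Matrix.mul_assoc]

/-- Let `A` be an `n × n` complex matrix and `k` a positive integer with `k ≤ n`.
For `t ∈ ℝ`, `A(t) = e^{it} A + e^{-it} Aᴴ` is Hermitian; write `λ_k(A(t))` for its
`k`-th largest eigenvalue.  If `μ ∈ Λ_k(A)`, then for every `t ∈ [0, 2π)`,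
`e^{it} μ + e^{-it} conj μ ≤ λ_k(A(t))`. -/
theorem rankKNumericalRange_halfplane_bound (n k : ℕ) (hk : 0 < k) (hkn : k ≤ n)
    (A : Matrix (Fin n) (Fin n) ℂ)
    (hHerm : ∀ t : ℝ,
      (Complex.exp (Complex.I * t) • A + Complex.exp (-(Complex.I * t)) • Aᴴ).IsHermitian)
    (μ : ℂ)
    (hμ : ∃ X : Matrix (Fin n) (Fin k) ℂ,
        Xᴴ * X = 1 ∧ Xᴴ * A * X = μ • (1 : Matrix (Fin k) (Fin k) ℂ)) :
    ∀ t ∈ Set.Ico (0 : ℝ) (2 * Real.pi),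
      Complex.exp (Complex.I * t) * μ +
        Complex.exp (-(Complex.I * t)) * (starRingEnd ℂ) μ ≤
      ((kthLargest ((hHerm t).eigenvalues) k : ℝ) : ℂ) := by
  obtain ⟨X, hX, hXA⟩ := hμ
  intro t _
  set z := Complex.exp (Complex.I * t) * μ
  have hconj : Complex.exp (-(Complex.I * t)) * starRingEnd ℂ μ = starRingEnd ℂ z := by
    rw [map_mul, ← Complex.exp_conj]
    simp
  have hXAH : Xᴴ * Aᴴ * X = starRingEnd ℂ μ • 1 := by
    simpa [conjTranspose_mul, Matrix.mul_assoc] using congrArg conjTranspose hXA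
  have hc : Xᴴ * (Complex.exp (Complex.I * t) • A + Complex.exp (-(Complex.I * t)) • Aᴴ) * X =
      ((2 * z.re : ℝ) : ℂ) • 1 := by
    rw [← Complex.add_conj, ← hconj, add_smul]
    simp only [Matrix.mul_add, Matrix.add_mul, Matrix.mul_smul, Matrix.smul_mul, hXA, hXAH,
      smul_smul, z]
  rw [hconj, Complex.add_conj]
  exact_mod_cast (hHerm t).le_kthLargest_eigenvalues hk hkn hX hc
end
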